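/- The additive topological group of the Banach space ℓ¹(ℕ, ℝ) admits, for every ε > 0, a continuous positive definite function p with p(0) = 1 and |1 - p(f)| ≥ 1 - exp(-ε) whenever ‖f‖₁ ≥ ε; namely p(f) = exp(-‖f‖₁) works. -/

import Mathlib

/-!
Since `exp (-|s - t|) = e^{-s} e^{-t} min (e^{2s}, e^{2t})` and
`min (a, b) = λ((0, a] ∩ (0, b])`, the kernel `exp (-|s - t|)` on `ℝ` is the Gram matrix of the
functions `e^{-s} 𝟙_{(0, e^{2s}]}` in `L²(ℝ)`, hence positive semidefinite. By the Schur product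
theorem so is `exp (-∑_{n ∈ s} |g_i n - g_j n|)` for every finite set of coordinates `s`, and
letting `s` grow gives `exp (-‖g_i - g_j‖₁)`, the positive semidefinite matrices being closed.
-/

open MeasureTheory Matrix Filter Topology
open scoped ComplexOrder

namespace Matrix

variable {ι 𝕜 : Type*} [Fintype ι] [RCLike 𝕜]

theorem isClosed_setOf_posSemidef : IsClosed {A : Matrix ι ι 𝕜 | A.PosSemidef} := by
  have : {A : Matrix ι ι 𝕜 | A.PosSemidef} =
      {A | Aᴴ = A} ∩ ⋂ x : ι → 𝕜, {A | 0 ≤ star x ⬝ᵥ (A *ᵥ x)} := by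
    ext A
    simp [posSemidef_iff_dotProduct_mulVec, IsHermitian]
  rw [this]
  refine (isClosed_eq (by fun_prop) continuous_id).inter (isClosed_iInter fun x => ?_)
  exact isClosed_le continuous_const
    (continuous_const.dotProduct (continuous_id.matrix_mulVec continuous_const))

theorem PosSemidef.of_tendsto {α : Type*} {l : Filter α} [l.NeBot] {M : α → Matrix ι ι 𝕜}
    {A : Matrix ι ι 𝕜} (hMA : Tendsto M l (𝓝 A)) (hM : ∀ᶠ a in l, (M a).PosSemidef) :
    A.PosSemidef :=
  isClosed_setOf_posSemidef.mem_of_tendsto hMA hM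

theorem PosSemidef.sum_sum_conj_mul_mul_nonneg {M : Matrix ι ι 𝕜} (hM : M.PosSemidef)
    (c : ι → 𝕜) : 0 ≤ ∑ i, ∑ j, starRingEnd 𝕜 (c i) * c j * M i j := by
  convert hM.dotProduct_mulVec_nonneg c using 1
  simp only [dotProduct, mulVec, Finset.mul_sum, Pi.star_apply, RCLike.star_def]
  exact Finset.sum_congr rfl fun i _ => Finset.sum_congr rfl fun j _ => by ring

end Matrix

theorem lp.hasSum_norm_one {α : Type*} {E : α → Type*} [∀ a, NormedAddCommGroup (E a)]
    (f : lp E 1) : HasSum (fun a => ‖f a‖) ‖f‖ := by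
  simpa using lp.hasSum_norm (by norm_num) f

theorem Real.exp_neg_abs_sub (s t : ℝ) :
    Real.exp (-|s - t|) =
      min (Real.exp (2 * s)) (Real.exp (2 * t)) * Real.exp (-s) * Real.exp (-t) := by
  rw [← Real.exp_monotone.map_min, ← Real.exp_add, ← Real.exp_add]
  congr 1
  rcases le_total s t with h | h
  · rw [abs_of_nonpos (by linarith), min_eq_left (by linarith)]; ring
  · rw [abs_of_nonneg (by linarith), min_eq_right (by linarith)]; ring

variable {ι : Type*} [Fintype ι]

theorem posSemidef_exp_neg_abs_sub (t : ι → ℝ) :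
    (of fun i j => (Real.exp (-|t i - t j|) : ℂ)).PosSemidef := by
  let v i : Lp ℂ 2 (volume : Measure ℝ) :=
    indicatorConstLp 2 (measurableSet_Ioc (a := 0) (b := Real.exp (2 * t i)))
      measure_Ioc_lt_top.ne (Real.exp (-t i) : ℂ)
  have hgram : (of fun i j => (Real.exp (-|t i - t j|) : ℂ)) = gram ℂ v := by
    ext i j
    rw [gram_apply, L2.inner_indicatorConstLp_indicatorConstLp _ _ measure_Ioc_lt_top.ne
      measure_Ioc_lt_top.ne, Set.Ioc_inter_Ioc, max_self,
      Real.volume_real_Ioc_of_le (le_min (Real.exp_pos _).le (Real.exp_pos _).le)]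
    simp only [of_apply, RCLike.inner_apply, Complex.conj_ofReal, Complex.real_smul]
    norm_cast
    rw [Real.exp_neg_abs_sub]
    ring
  rw [hgram]
  exact posSemidef_gram ℂ v

theorem posSemidef_exp_neg_sum_abs_sub {α : Type*} (g : ι → α → ℝ) (s : Finset α) :
    (of fun i j => (Real.exp (-∑ a ∈ s, |g i a - g j a|) : ℂ)).PosSemidef := by
  classical
  induction s using Finset.induction_on with
  | empty =>
    have hgram : (of fun i j => (Real.exp (-∑ a ∈ ∅, |g i a - g j a|) : ℂ)) =
        gram ℂ fun _ : ι => (1 : ℂ) := by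
      ext i j
      simp [gram_apply]
    rw [hgram]
    exact posSemidef_gram ℂ _
  | insert a s ha ih =>
    have hprod : (of fun i j => (Real.exp (-∑ a ∈ insert a s, |g i a - g j a|) : ℂ)) =
        (of fun i j => (Real.exp (-|g i a - g j a|) : ℂ)) ⊙
          of fun i j => (Real.exp (-∑ a ∈ s, |g i a - g j a|) : ℂ) := by
      ext i j
      simp only [of_apply, hadamard_apply, Finset.sum_insert ha, neg_add, Real.exp_add,
        Complex.ofReal_mul]
    rw [hprod]
    exact (posSemidef_exp_neg_abs_sub (g · a)).hadamard ih

theorem posSemidef_exp_neg_norm_sub {α : Type*} (g : ι → lp (fun _ : α => ℝ) 1) :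
    (of fun i j => (Real.exp (-‖g i - g j‖) : ℂ)).PosSemidef := by
  refine PosSemidef.of_tendsto (l := atTop)
    (tendsto_pi_nhds.2 fun i => tendsto_pi_nhds.2 fun j => ?_)
    (Eventually.of_forall fun s => posSemidef_exp_neg_sum_abs_sub (fun i => g i) s)
  have hsum : HasSum (fun a => |g i a - g j a|) ‖g i - g j‖ := by
    simpa only [lp.coeFn_sub, Pi.sub_apply, Real.norm_eq_abs] using lp.hasSum_norm_one (g i - g j)
  exact ((Complex.continuous_ofReal.comp Real.continuous_exp).tendsto _).comp (Tendsto.neg hsum)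

theorem l1_unitary_separation_general (ε : ℝ) :
    ∃ p : lp (fun _ : ℕ => ℝ) 1 → ℂ,
      (p = fun f => (Real.exp (-‖f‖) : ℂ)) ∧
      Continuous p ∧ p 0 = 1 ∧
      (∀ f, p (-f) = starRingEnd ℂ (p f)) ∧
      (∀ (n : ℕ) (g : Fin n → lp (fun _ : ℕ => ℝ) 1) (c : Fin n → ℂ),
        0 ≤ ∑ i, ∑ j, starRingEnd ℂ (c i) * c j * p (g j - g i)) ∧
      (∀ f, ε ≤ ‖f‖ → 1 - Real.exp (-ε) ≤ ‖1 - p f‖) := by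
  refine ⟨fun f => (Real.exp (-‖f‖) : ℂ), rfl, by fun_prop, by simp, fun f => ?_,
    fun n g c => ?_, fun f hf => ?_⟩
  · simp only [norm_neg, Complex.conj_ofReal]
  · convert (posSemidef_exp_neg_norm_sub g).sum_sum_conj_mul_mul_nonneg c using 5 with i _ j
    rw [of_apply, norm_sub_rev]
  · have hexp : Real.exp (-‖f‖) ≤ Real.exp (-ε) := Real.exp_le_exp.2 (neg_le_neg hf)
    calc 1 - Real.exp (-ε) ≤ 1 - Real.exp (-‖f‖) := by linarith
      _ ≤ ‖1 - (Real.exp (-‖f‖) : ℂ)‖ := by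
        rw [← Complex.ofReal_one, ← Complex.ofReal_sub, Complex.norm_real]
        exact Real.le_norm_self _

/-- On the additive group of `ℓ¹(ℕ, ℝ)`, for every `ε > 0` the function
`p f = exp (-‖f‖₁)` is a continuous positive definite function with `p 0 = 1` and
`|1 - p f| ≥ 1 - exp (-ε)` whenever `‖f‖₁ ≥ ε`. -/
theorem l1_unitary_separation (ε : ℝ) (hε : 0 < ε) :
    ∃ p : lp (fun _ : ℕ => ℝ) 1 → ℂ,
      (p = fun f => (Real.exp (-‖f‖) : ℂ)) ∧
      Continuous p ∧ p 0 = 1 ∧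
      (∀ f, p (-f) = starRingEnd ℂ (p f)) ∧
      (∀ (n : ℕ) (g : Fin n → lp (fun _ : ℕ => ℝ) 1) (c : Fin n → ℂ),
        0 ≤ ∑ i, ∑ j, starRingEnd ℂ (c i) * c j * p (g j - g i)) ∧
      (∀ f, ε ≤ ‖f‖ → 1 - Real.exp (-ε) ≤ ‖1 - p f‖) :=
  l1_unitary_separation_general ε
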